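/- Assume Q ≥ 2. For every coarse configuration η with P̄(η) > 0, the first coarse-grained approximation H̄⁰(η) = E[H_N | F = η] is given explicitly by H̄⁰(η) = −(1/2) Σ_{k} Σ_{l ≠ k} J̄(k,l) η(k)η(l) − (1/2) Σ_k J̄(k,k) (η(k)² − Q) + h Σ_k η(k), where J̄(k,l) = Q^{−2} Σ_{x∈C_k, y∈C_l} J(x−y) for k ≠ l and J̄(k,k) = (Q(Q−1))^{−1} Σ_{x,y∈C_k, x≠y} J(x−y). -/

import Mathlib

open Finset

/-- Real spin value of a Boolean spin variable (`true ↦ +1`, `false ↦ −1`). -/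
def spin (b : Bool) : ℝ := if b then 1 else -1

/-- Integer spin value of a Boolean spin variable. -/
def spinZ (b : Bool) : ℤ := if b then 1 else -1

/-- The microscopic lattice site of the coarse cell `C_k` with offset `a`, i.e. the point
`q·k + a` of `Λ = (ℤ/nℤ)ᵈ` with `n = m·q`. -/
def cellPoint (d m q : ℕ) (k : Fin d → ZMod m) (a : Fin d → Fin q) :
    Fin d → ZMod (m * q) :=
  fun i => ((q * (k i).val + (a i).val : ℕ) : ZMod (m * q))

/-- The blocking map `F`: the coarse spin `η(k) = Σ_{x ∈ C_k} σ(x)`. -/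
def blockF (d m q : ℕ) (σ : (Fin d → ZMod (m * q)) → Bool)
    (k : Fin d → ZMod m) : ℤ :=
  ∑ a : Fin d → Fin q, spinZ (σ (cellPoint d m q k a))

/-- The fiber `{σ : F(σ) = η}` of the blocking map over a coarse configuration `η`. -/
def fiber (d m q : ℕ) [NeZero m] [NeZero (m * q)]
    (η : (Fin d → ZMod m) → ℤ) : Finset ((Fin d → ZMod (m * q)) → Bool) :=
  Finset.univ.filter (fun σ => blockF d m q σ = η)

/-- The microscopic Hamiltonian
`H_N(σ) = −(1/2) Σ_x Σ_{y ≠ x} J(x−y) σ(x)σ(y) + h Σ_x σ(x)` on `Λ = (ℤ/nℤ)ᵈ`. -/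
noncomputable def ham (d n : ℕ) [NeZero n] (J : (Fin d → ZMod n) → ℝ) (h : ℝ)
    (σ : (Fin d → ZMod n) → Bool) : ℝ :=
  -(1 / 2) * ∑ x : Fin d → ZMod n, ∑ y ∈ Finset.univ.filter (fun y => y ≠ x),
      J (x - y) * (spin (σ x) * spin (σ y))
    + h * ∑ x : Fin d → ZMod n, spin (σ x)

/-!
Identify a microscopic configuration with a function on (cell, offset) pairs. The fiber of the
blocking map is invariant under every permutation of sites that maps each cell onto itself, and
such permutations carry any pair of distinct sites to any other pair of distinct sites lying in
the same two cells. So `∑_{σ ∈ fiber} σ(x) σ(y)` depends only on the cells `k, l` of `x ≠ y`.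
Summing it over all such pairs and using that
`∑_{x ∈ C_k, y ∈ C_l, x ≠ y} σ(x) σ(y) = η(k) η(l) - δ_{kl} Q` for every `σ` in the fiber
determines it, and the pair energy becomes a sum of cell averages of `J`. The field term
`h ∑_x σ(x) = h ∑_k η(k)` is constant on the fiber.
-/

lemma spin_eq_cast (b : Bool) : spin b = spinZ b := by
  cases b <;> simp [spin, spinZ]

lemma spin_mul_self (b : Bool) : spin b * spin b = 1 := by
  cases b <;> norm_num [spin]

lemma card_mul_eq_mul_card_of_sums_const {ι α R : Type*} [CommSemiring R] {D : Finset ι}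
    {S : Finset α} {φ : ι → α → R} {s c : R} (hs : ∀ i ∈ D, ∑ σ ∈ S, φ i σ = s)
    (hc : ∀ σ ∈ S, ∑ i ∈ D, φ i σ = c) : #D * s = c * #S :=
  calc (#D : R) * s = ∑ i ∈ D, ∑ σ ∈ S, φ i σ := by rw [sum_congr rfl hs, sum_const, nsmul_eq_mul]
    _ = ∑ σ ∈ S, ∑ i ∈ D, φ i σ := sum_comm
    _ = c * #S := by rw [sum_congr rfl hc, sum_const, nsmul_eq_mul, mul_comm]

lemma apply_swap_apply_of_apply_eq {X Y : Type*} [DecidableEq X] (f : X → Y) {p r : X}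
    (h : f p = f r) (x : X) : f (Equiv.swap p r x) = f x := by
  rw [Equiv.swap_apply_def]
  split_ifs <;> simp_all

lemma sum_comp_perm_of_fst_eq {K A M : Type*} [Fintype A] [AddCommMonoid M]
    {π : Equiv.Perm (K × A)} (hπ : ∀ p, (π p).1 = p.1) (f : K × A → M) (k : K) :
    ∑ a, f (π (k, a)) = ∑ a, f (k, a) := by
  have hinj : Function.Injective fun a => (π (k, a)).2 := fun a a' h => by
    simpa using π.injective (Prod.ext ((hπ (k, a)).trans (hπ (k, a')).symm) h)
  calc ∑ a, f (π (k, a)) = ∑ a, f (k, (π (k, a)).2) :=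
        sum_congr rfl fun a _ => congrArg f (Prod.ext (hπ _) rfl)
    _ = ∑ a, f (k, a) := (Finite.injective_iff_bijective.mp hinj).sum_comp fun a => f (k, a)

section CellPairs

variable {K A : Type*} [Fintype A] [DecidableEq K] [DecidableEq A]

variable (A) in
def cellPairs (k l : K) : Finset (A × A) :=
  univ.filter fun ab => (k, ab.1) ≠ (l, ab.2)

/-- The paper's `J̄(k, l)`: in both of its cases it is the average of the coupling over the pairs
of distinct sites of `C_k × C_l`. -/
noncomputable def cellAverage (W : K × A → K × A → ℝ) (k l : K) : ℝ :=
  (∑ ab ∈ cellPairs A k l, W (k, ab.1) (l, ab.2)) / #(cellPairs A k l)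

lemma sum_cellPairs_spin_mul_spin (σ : K × A → Bool) (k l : K) :
    ∑ ab ∈ cellPairs A k l, spin (σ (k, ab.1)) * spin (σ (l, ab.2))
      = (∑ a, spin (σ (k, a))) * (∑ b, spin (σ (l, b)))
        - if k = l then (Fintype.card A : ℝ) else 0 := by
  rw [sum_mul_sum, ← Fintype.sum_prod_type', eq_sub_iff_add_eq, cellPairs,
    ← sum_filter_add_sum_filter_not univ fun ab : A × A => (k, ab.1) ≠ (l, ab.2)]
  congr 1
  split_ifs with hkl
  · subst hkl
    simp [sum_filter, Fintype.sum_prod_type, spin_mul_self]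
  · simp [hkl]

lemma card_cellPairs (k l : K) :
    (#(cellPairs A k l) : ℝ)
      = Fintype.card A * Fintype.card A - if k = l then (Fintype.card A : ℝ) else 0 := by
  simpa [spin] using sum_cellPairs_spin_mul_spin (A := A) (fun _ => true) k l

lemma cellAverage_of_ne (W : K × A → K × A → ℝ) {k l : K} (hkl : k ≠ l) :
    cellAverage W k l = (∑ a, ∑ b, W (k, a) (l, b)) / (Fintype.card A : ℝ) ^ 2 := by
  have hD : cellPairs A k l = univ := filter_true_of_mem fun ab _ => by simp [hkl]
  rw [cellAverage, card_cellPairs, hD, if_neg hkl, Fintype.sum_prod_type, sq, sub_zero]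

lemma cellAverage_self (W : K × A → K × A → ℝ) (k : K) :
    cellAverage W k k = (∑ a, ∑ b ∈ univ.filter (· ≠ a), W (k, a) (k, b))
      / ((Fintype.card A : ℝ) * (Fintype.card A - 1)) := by
  rw [cellAverage, card_cellPairs, if_pos rfl, mul_sub_one]
  simp [cellPairs, sum_filter, Fintype.sum_prod_type, ne_comm]

lemma sum_sum_ne_eq_sum_cellPairs [Fintype K] {M : Type*} [AddCommMonoid M]
    (F : K × A → K × A → M) :
    ∑ p, ∑ p' ∈ univ.filter (· ≠ p), F p p'
      = ∑ k, ∑ l, ∑ ab ∈ cellPairs A k l, F (k, ab.1) (l, ab.2) := by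
  simp only [cellPairs, sum_filter, Fintype.sum_prod_type]
  refine sum_congr rfl fun k _ => sum_comm.trans ?_
  simp [eq_comm]

end CellPairs

section CellFiber

variable {K A : Type*} [Fintype K] [Fintype A] [DecidableEq K] [DecidableEq A]

variable (A) in
def cellFiber (η : K → ℤ) : Finset (K × A → Bool) :=
  univ.filter fun σ => ∀ k, ∑ a, spinZ (σ (k, a)) = η k

lemma sum_spin_of_mem_cellFiber {η : K → ℤ} {σ : K × A → Bool} (hσ : σ ∈ cellFiber A η)
    (k : K) : ∑ a, spin (σ (k, a)) = η k := by
  simp only [cellFiber, mem_filter, mem_univ, true_and] at hσ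
  simp only [spin_eq_cast, ← hσ k, Int.cast_sum]

lemma sum_spin_eq_sum_of_mem_cellFiber {η : K → ℤ} {σ : K × A → Bool}
    (hσ : σ ∈ cellFiber A η) : ∑ p, spin (σ p) = ∑ k, (η k : ℝ) := by
  simp only [Fintype.sum_prod_type, sum_spin_of_mem_cellFiber hσ]

lemma sum_cellFiber_comp_perm {M : Type*} [AddCommMonoid M] {η : K → ℤ}
    {π : Equiv.Perm (K × A)} (hπ : ∀ p, (π p).1 = p.1) (f : (K × A → Bool) → M) :
    ∑ σ ∈ cellFiber A η, f (σ ∘ π) = ∑ σ ∈ cellFiber A η, f σ := by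
  have hmem (σ : K × A → Bool) : σ ∘ π ∈ cellFiber A η ↔ σ ∈ cellFiber A η := by
    simp only [cellFiber, mem_filter, mem_univ, true_and, Function.comp_apply,
      sum_comp_perm_of_fst_eq hπ fun p => spinZ (σ p)]
  exact sum_equiv (π.symm.arrowCongr (Equiv.refl Bool)) (fun σ => (hmem σ).symm)
    fun σ _ => rfl

lemma sum_cellFiber_apply_apply_congr {M : Type*} [AddCommMonoid M] {η : K → ℤ}
    {p p' r r' : K × A} (hp : p ≠ p') (hr : r ≠ r') (h₁ : r.1 = p.1) (h₂ : r'.1 = p'.1)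
    (g : Bool → Bool → M) :
    ∑ σ ∈ cellFiber A η, g (σ r) (σ r') = ∑ σ ∈ cellFiber A η, g (σ p) (σ p') := by
  -- `swap r p`, then `swap c p'` with `c` the new position of `r'`, sends `r ↦ p`, `r' ↦ p'`
  set c := Equiv.swap r p r'
  have hc : c ≠ p := fun h =>
    hr ((Equiv.swap_apply_eq_iff.mp h).trans (Equiv.swap_apply_right r p)).symm
  have hc₁ : c.1 = p'.1 := (apply_swap_apply_of_apply_eq Prod.fst h₁ r').trans h₂
  have hπ (x : K × A) : (((Equiv.swap r p).trans (Equiv.swap c p')) x).1 = x.1 := by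
    simp only [Equiv.trans_apply, apply_swap_apply_of_apply_eq Prod.fst hc₁,
      apply_swap_apply_of_apply_eq Prod.fst h₁]
  rw [← sum_cellFiber_comp_perm hπ]
  simp [Equiv.swap_apply_of_ne_of_ne hc.symm hp, c]

lemma card_cellPairs_mul_sum_cellFiber {η : K → ℤ} {k l : K} {a b : A}
    (hab : (a, b) ∈ cellPairs A k l) :
    #(cellPairs A k l) * ∑ σ ∈ cellFiber A η, spin (σ (k, a)) * spin (σ (l, b))
      = ((η k : ℝ) * η l - if k = l then (Fintype.card A : ℝ) else 0) * #(cellFiber A η) := by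
  refine card_mul_eq_mul_card_of_sums_const
    (φ := fun ab σ => spin (σ (k, ab.1)) * spin (σ (l, ab.2))) (fun ab hab' => ?_) fun σ hσ => ?_
  · simp only [cellPairs, mem_filter, mem_univ, true_and] at hab hab'
    exact sum_cellFiber_apply_apply_congr hab hab' rfl rfl fun x y => spin x * spin y
  · rw [sum_cellPairs_spin_mul_spin, sum_spin_of_mem_cellFiber hσ,
      sum_spin_of_mem_cellFiber hσ]

lemma sum_cellPairs_mul_sum_cellFiber (η : K → ℤ) (W : K × A → K × A → ℝ) (k l : K) :
    ∑ ab ∈ cellPairs A k l, W (k, ab.1) (l, ab.2) *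
        ∑ σ ∈ cellFiber A η, spin (σ (k, ab.1)) * spin (σ (l, ab.2))
      = #(cellFiber A η) * (cellAverage W k l *
          ((η k : ℝ) * η l - if k = l then (Fintype.card A : ℝ) else 0)) := by
  rcases (cellPairs A k l).eq_empty_or_nonempty with hD | ⟨ab₀, hab₀⟩
  · simp [cellAverage, hD]
  have hD : (#(cellPairs A k l) : ℝ) ≠ 0 := Nat.cast_ne_zero.mpr (card_ne_zero_of_mem hab₀)
  have htwo : ∀ ab ∈ cellPairs A k l,
      ∑ σ ∈ cellFiber A η, spin (σ (k, ab.1)) * spin (σ (l, ab.2))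
        = ((η k : ℝ) * η l - if k = l then (Fintype.card A : ℝ) else 0) * #(cellFiber A η)
          / #(cellPairs A k l) := fun ab hab => by
    rw [eq_div_iff hD, mul_comm]
    exact card_cellPairs_mul_sum_cellFiber hab
  rw [sum_congr rfl fun ab hab => congrArg _ (htwo ab hab), ← sum_mul, cellAverage]
  field_simp

lemma sum_cellFiber_pairEnergy (η : K → ℤ) (W : K × A → K × A → ℝ) :
    ∑ σ ∈ cellFiber A η, ∑ p, ∑ p' ∈ univ.filter (· ≠ p), W p p' * (spin (σ p) * spin (σ p'))
      = #(cellFiber A η) * ∑ k, ∑ l, cellAverage W k l *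
          ((η k : ℝ) * η l - if k = l then (Fintype.card A : ℝ) else 0) := by
  simp only [sum_sum_ne_eq_sum_cellPairs, mul_sum, ← sum_cellPairs_mul_sum_cellFiber]
  rw [sum_comm]
  refine sum_congr rfl fun k _ => sum_comm.trans <| sum_congr rfl fun l _ => sum_comm

end CellFiber

lemma natCast_mul_val_add_injective (m q : ℕ) [NeZero m] :
    Function.Injective fun x : ZMod m × Fin q => ((q * x.1.val + x.2 : ℕ) : ZMod (m * q)) := by
  rintro ⟨k, a⟩ ⟨k', a'⟩ h
  have hlt (k : ZMod m) (a : Fin q) : q * k.val + a < m * q := by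
    nlinarith [k.val_lt, a.isLt]
  simp only [ZMod.natCast_eq_natCast_iff', Nat.mod_eq_of_lt (hlt _ _)] at h
  have hk : k.val = k'.val := by
    simpa [Nat.mul_add_div a.pos, Nat.div_eq_of_lt a.isLt, Nat.div_eq_of_lt a'.isLt]
      using congrArg (· / q) h
  rw [hk] at h
  exact Prod.ext (ZMod.val_injective _ hk) (Fin.ext (Nat.add_left_cancel h))

lemma cellPoint_bijective (d m q : ℕ) [NeZero m] [NeZero (m * q)] :
    Function.Bijective fun p : (Fin d → ZMod m) × (Fin d → Fin q) => cellPoint d m q p.1 p.2 := by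
  refine (Fintype.bijective_iff_injective_and_card _).mpr ⟨fun p p' h => ?_, ?_⟩
  · have hi (i : Fin d) : (p.1 i, p.2 i) = (p'.1 i, p'.2 i) :=
      natCast_mul_val_add_injective m q (congrFun h i)
    exact Prod.ext (funext fun i => congrArg Prod.fst (hi i))
      (funext fun i => congrArg Prod.snd (hi i))
  · simp [mul_pow]

noncomputable def cellEquiv (d m q : ℕ) [NeZero m] [NeZero (m * q)] :
    (Fin d → ZMod m) × (Fin d → Fin q) ≃ (Fin d → ZMod (m * q)) :=
  Equiv.ofBijective _ (cellPoint_bijective d m q)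

lemma fiber_eq_map_cellFiber (d m q : ℕ) [NeZero m] [NeZero (m * q)] (η : (Fin d → ZMod m) → ℤ) :
    fiber d m q η
      = (cellFiber _ η).map ((cellEquiv d m q).arrowCongr (Equiv.refl Bool)).toEmbedding := by
  ext σ
  simp [mem_map_equiv, fiber, cellFiber, blockF, funext_iff, cellEquiv]

lemma ham_arrowCongr {X : Type*} [Fintype X] [DecidableEq X] {d n : ℕ} [NeZero n]
    (J : (Fin d → ZMod n) → ℝ) (h : ℝ) (e : X ≃ (Fin d → ZMod n)) (τ : X → Bool) :
    ham d n J h (e.arrowCongr (Equiv.refl Bool) τ)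
      = -(1 / 2) * ∑ p, ∑ p' ∈ univ.filter (· ≠ p), J (e p - e p') * (spin (τ p) * spin (τ p'))
        + h * ∑ p, spin (τ p) := by
  simp only [ham, sum_filter, ← e.sum_comp, e.injective.ne_iff, Equiv.arrowCongr_apply,
    Function.comp_apply, Equiv.symm_apply_apply, Equiv.refl_apply]

theorem first_coarse_hamiltonian_explicit_general
    (d m q : ℕ) [NeZero m] [NeZero (m * q)]
    (J : (Fin d → ZMod (m * q)) → ℝ)
    (h : ℝ)
    (η : (Fin d → ZMod m) → ℤ) (hη : (fiber d m q η).Nonempty)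
    (Jbar : (Fin d → ZMod m) → (Fin d → ZMod m) → ℝ)
    (hJbar : ∀ k l, k ≠ l → Jbar k l =
      (∑ a : Fin d → Fin q, ∑ b : Fin d → Fin q,
          J (cellPoint d m q k a - cellPoint d m q l b)) / ((q : ℝ) ^ d) ^ 2)
    (hJbarDiag : ∀ k, Jbar k k =
      (∑ a : Fin d → Fin q, ∑ b ∈ Finset.univ.filter (fun b => b ≠ a),
          J (cellPoint d m q k a - cellPoint d m q k b))
        / (((q : ℝ) ^ d) * ((q : ℝ) ^ d - 1))) :
    (∑ σ ∈ fiber d m q η, ham d (m * q) J h σ) / ((fiber d m q η).card : ℝ)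
      = -(1 / 2) * (∑ k : Fin d → ZMod m, ∑ l ∈ Finset.univ.filter (fun l => l ≠ k),
            Jbar k l * ((η k : ℝ) * (η l : ℝ)))
        - (1 / 2) * (∑ k : Fin d → ZMod m, Jbar k k * ((η k : ℝ) ^ 2 - (q : ℝ) ^ d))
        + h * ∑ k : Fin d → ZMod m, (η k : ℝ) := by
  have hQ : (Fintype.card (Fin d → Fin q) : ℝ) = (q : ℝ) ^ d := by simp
  have hJavg (k l) :
      cellAverage (fun p p' => J (cellEquiv d m q p - cellEquiv d m q p')) k l = Jbar k l := by
    rcases eq_or_ne k l with rfl | hkl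
    · rw [cellAverage_self, hJbarDiag, hQ]; rfl
    · rw [cellAverage_of_ne _ hkl, hJbar k l hkl, hQ]; rfl
  have hdiag (k) : ∑ l, Jbar k l * ((η k : ℝ) * η l - if k = l then (q : ℝ) ^ d else 0)
      = ∑ l ∈ univ.filter (· ≠ k), Jbar k l * ((η k : ℝ) * η l)
        + Jbar k k * ((η k : ℝ) ^ 2 - (q : ℝ) ^ d) := by
    rw [filter_ne', ← sum_erase_add _ _ (mem_univ k), if_pos rfl, sq]
    congr 1
    exact sum_congr rfl fun l hl => by rw [if_neg (ne_of_mem_erase hl).symm, sub_zero]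
  rw [fiber_eq_map_cellFiber] at hη ⊢
  have hS : (#(cellFiber _ η) : ℝ) ≠ 0 := Nat.cast_ne_zero.mpr (map_nonempty.mp hη).card_pos.ne'
  simp only [sum_map, card_map, Equiv.coe_toEmbedding, ham_arrowCongr, sum_add_distrib,
    ← mul_sum, sum_cellFiber_pairEnergy, hJavg, hQ, hdiag]
  rw [sum_congr rfl fun σ hσ => sum_spin_eq_sum_of_mem_cellFiber hσ, sum_const, nsmul_eq_mul]
  field_simp
  ring

/-- **Explicit form of the first coarse-grained Hamiltonian:** for `Q ≥ 2` and every coarse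
configuration `η` with `P̄(η) > 0`,
`H̄⁰(η) = E[H_N | F = η]
 = −(1/2) Σ_k Σ_{l≠k} J̄(k,l) η(k)η(l) − (1/2) Σ_k J̄(k,k)(η(k)² − Q) + h Σ_k η(k)`. -/
theorem first_coarse_hamiltonian_explicit
    (d m q : ℕ) [NeZero m] [NeZero (m * q)] (hd : 1 ≤ d) (hm : 1 ≤ m)
    (hQ : 2 ≤ q ^ d)
    (J : (Fin d → ZMod (m * q)) → ℝ) (hJeven : ∀ x, J (-x) = J x) (hJ0 : J 0 = 0)
    (h : ℝ)
    (η : (Fin d → ZMod m) → ℤ) (hη : (fiber d m q η).Nonempty)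
    (Jbar : (Fin d → ZMod m) → (Fin d → ZMod m) → ℝ)
    (hJbar : ∀ k l, k ≠ l → Jbar k l =
      (∑ a : Fin d → Fin q, ∑ b : Fin d → Fin q,
          J (cellPoint d m q k a - cellPoint d m q l b)) / ((q : ℝ) ^ d) ^ 2)
    (hJbarDiag : ∀ k, Jbar k k =
      (∑ a : Fin d → Fin q, ∑ b ∈ Finset.univ.filter (fun b => b ≠ a),
          J (cellPoint d m q k a - cellPoint d m q k b))
        / (((q : ℝ) ^ d) * ((q : ℝ) ^ d - 1))) :
    (∑ σ ∈ fiber d m q η, ham d (m * q) J h σ) / ((fiber d m q η).card : ℝ)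
      = -(1 / 2) * (∑ k : Fin d → ZMod m, ∑ l ∈ Finset.univ.filter (fun l => l ≠ k),
            Jbar k l * ((η k : ℝ) * (η l : ℝ)))
        - (1 / 2) * (∑ k : Fin d → ZMod m, Jbar k k * ((η k : ℝ) ^ 2 - (q : ℝ) ^ d))
        + h * ∑ k : Fin d → ZMod m, (η k : ℝ) :=
  first_coarse_hamiltonian_explicit_general d m q J h η hη Jbar hJbar hJbarDiag
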